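/- Let U ⊆ ℂ be open, β a real constant, and ξ : U → ℂ², e : U → ℂ, η̄ : U → ℂ smooth maps satisfying the Gross–Neveu Euler–Lagrange equation ∂̄ξ = ½ η̄ ξ + i β ē ⟨ξ,ξ⟩ σ₂ ξ̄ (where ē is the complex conjugate of e, ξ̄ the componentwise conjugate of ξ, and σ₂ acts on ℂ² as a matrix). Then the current J := e·v(ξ) : U → ℂ³ satisfies ∂̄J = (∂̄e + η̄ e)·v(ξ) + 2β |e|² ⟨ξ,ξ⟩² n_ξ at every point where ξ ≠ 0, where n_ξ := (2 Re(ξ̄₀ξ₁), 2 Im(ξ̄₀ξ₁), |ξ₀|²−|ξ₁|²)/⟨ξ,ξ⟩. -/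

import Mathlib

open Complex ComplexConjugate

noncomputable section

/-- Wirtinger derivative `∂f = ½(∂ₓf − i ∂_yf)`. -/
def wirt {E : Type*} [NormedAddCommGroup E] [NormedSpace ℂ E] (f : ℂ → E) (z : ℂ) : E :=
  (2 : ℂ)⁻¹ • (fderiv ℝ f z 1 - Complex.I • fderiv ℝ f z Complex.I)

/-- Conjugate Wirtinger derivative `∂̄f = ½(∂ₓf + i ∂_yf)`. -/
def wirtb {E : Type*} [NormedAddCommGroup E] [NormedSpace ℂ E] (f : ℂ → E) (z : ℂ) : E :=
  (2 : ℂ)⁻¹ • (fderiv ℝ f z 1 + Complex.I • fderiv ℝ f z Complex.I)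

/-- Complex-bilinear dot product on ℂ³. -/
def cdot3 (a b : Fin 3 → ℂ) : ℂ := ∑ i, a i * b i

/-- Embedding ℝ³ ↪ ℂ³. -/
def toC3 (v : Fin 3 → ℝ) : Fin 3 → ℂ := fun i => (v i : ℂ)

/-- Euclidean norm on ℝ³. -/
def rnorm3 (v : Fin 3 → ℝ) : ℝ := Real.sqrt (∑ i, v i ^ 2)

/-- The null vector `v(ξ) = (ξ₀²−ξ₁², i(ξ₀²+ξ₁²), −2ξ₀ξ₁)` associated to a spinor. -/
def spinV (ξ : Fin 2 → ℂ) : Fin 3 → ℂ :=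
  ![ξ 0 ^ 2 - ξ 1 ^ 2, Complex.I * (ξ 0 ^ 2 + ξ 1 ^ 2), -2 * ξ 0 * ξ 1]

/-- The spinor norm `⟨ξ,ξ⟩ = |ξ₀|² + |ξ₁|²`. -/
def spinSq (ξ : Fin 2 → ℂ) : ℝ := Complex.normSq (ξ 0) + Complex.normSq (ξ 1)

/-- The vector `n_ξ = (2 Re(ξ̄₀ξ₁), 2 Im(ξ̄₀ξ₁), |ξ₀|²−|ξ₁|²)/⟨ξ,ξ⟩`. -/
def spinN (ξ : Fin 2 → ℂ) : Fin 3 → ℝ :=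
  (spinSq ξ)⁻¹ •
    ![2 * ((starRingEnd ℂ) (ξ 0) * ξ 1).re, 2 * ((starRingEnd ℂ) (ξ 0) * ξ 1).im,
      Complex.normSq (ξ 0) - Complex.normSq (ξ 1)]

/-- The second Pauli matrix. -/
def sigma2 : Matrix (Fin 2) (Fin 2) ℂ := !![0, -Complex.I; Complex.I, 0]

/-- The Gross–Neveu Euler–Lagrange equation `∂̄ξ = ½ ηb ξ + iβ ē ⟨ξ,ξ⟩ σ₂ ξ̄`. -/
def grossNeveuEq (β : ℝ) (ξ : ℂ → Fin 2 → ℂ) (e ηb : ℂ → ℂ) (z : ℂ) : Prop :=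
  wirtb ξ z = ((2 : ℂ)⁻¹ * ηb z) • ξ z +
    (Complex.I * (β : ℂ) * (starRingEnd ℂ) (e z) * (spinSq (ξ z) : ℂ)) •
      sigma2.mulVec (fun A => (starRingEnd ℂ) (ξ z A))

lemma wirtb_mul (f g : ℂ → ℂ) (z : ℂ) (hf : DifferentiableAt ℝ f z) (hg : DifferentiableAt ℝ g z) :
    wirtb (fun w => f w * g w) z = wirtb f z * g z + f z * wirtb g z := by
  unfold wirtb
  rw [fderiv_fun_mul hf hg]
  simp [smul_eq_mul]
  ring

lemma wirtb_const_mul (c : ℂ) (f : ℂ → ℂ) (z : ℂ) (hf : DifferentiableAt ℝ f z) :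
    wirtb (fun w => c * f w) z = c * wirtb f z := by
  unfold wirtb
  rw [fderiv_const_mul hf]
  simp [smul_eq_mul]
  ring

lemma wirtb_sub (f g : ℂ → ℂ) (z : ℂ) (hf : DifferentiableAt ℝ f z) (hg : DifferentiableAt ℝ g z) :
    wirtb (fun w => f w - g w) z = wirtb f z - wirtb g z := by
  unfold wirtb
  rw [fderiv_fun_sub hf hg]
  simp [smul_eq_mul]
  ring

lemma wirtb_add' (f g : ℂ → ℂ) (z : ℂ) (hf : DifferentiableAt ℝ f z) (hg : DifferentiableAt ℝ g z) :
    wirtb (fun w => f w + g w) z = wirtb f z + wirtb g z := by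
  unfold wirtb
  rw [fderiv_fun_add hf hg]
  simp [smul_eq_mul]
  ring

lemma wirtb_sq (f : ℂ → ℂ) (z : ℂ) (hf : DifferentiableAt ℝ f z) :
    wirtb (fun w => f w ^ 2) z = 2 * f z * wirtb f z := by
  have h : (fun w => f w ^ 2) = fun w => f w * f w := by funext w; ring
  rw [h, wirtb_mul f f z hf hf]; ring

lemma wirtb_pi {n : ℕ} (f : ℂ → Fin n → ℂ) (z : ℂ)
    (h : ∀ i, DifferentiableAt ℝ (fun w => f w i) z) (i : Fin n) :
    wirtb f z i = wirtb (fun w => f w i) z := by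
  unfold wirtb
  rw [show f = (fun w i => f w i) from rfl, fderiv_pi h]
  simp

lemma wirtb_eval {n : ℕ} (f : ℂ → Fin n → ℂ) (z : ℂ)
    (h : DifferentiableAt ℝ f z) (i : Fin n) :
    wirtb (fun w => f w i) z = wirtb f z i := by
  unfold wirtb
  have hf : fderiv ℝ (⇑(ContinuousLinearMap.proj i : (Fin n → ℂ) →L[ℝ] ℂ) ∘ f) z
      = (ContinuousLinearMap.proj i : (Fin n → ℂ) →L[ℝ] ℂ).comp (fderiv ℝ f z) :=
    (((ContinuousLinearMap.proj i : (Fin n → ℂ) →L[ℝ] ℂ).hasFDerivAt).comp z h.hasFDerivAt).fderiv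
  rw [show (fun w => f w i) = (⇑(ContinuousLinearMap.proj i : (Fin n → ℂ) →L[ℝ] ℂ) ∘ f) from rfl]
  rw [hf]
  simp

lemma im_cast_eq (x : ℂ) : ((x.im : ℝ) : ℂ) = (x - (starRingEnd ℂ) x) * (-Complex.I) / 2 := by
  linear_combination (norm := (push_cast; ring1))
    (Complex.I/2) * Complex.sub_conj x + (x.im : ℂ) * Complex.I_sq

lemma re_cast_eq (x : ℂ) : ((x.re : ℝ) : ℂ) = (x + (starRingEnd ℂ) x) / 2 := by
  rw [Complex.add_conj]; push_cast; ring

/-- on solutions of the Gross–Neveu equation, the current `J = e·v(ξ)`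
satisfies `∂̄J = (∂̄e + ηbe)·v(ξ) + 2β|e|²⟨ξ,ξ⟩² n_ξ` wherever `ξ ≠ 0`. -/
theorem gross_neveu_current_equation
    (U : Set ℂ) (hU : IsOpen U) (β : ℝ)
    (ξ : ℂ → Fin 2 → ℂ) (e ηb : ℂ → ℂ)
    (hξ : ContDiffOn ℝ (⊤ : ℕ∞) ξ U) (he : ContDiffOn ℝ (⊤ : ℕ∞) e U) (hη : ContDiffOn ℝ (⊤ : ℕ∞) ηb U)
    (heq : ∀ z ∈ U, grossNeveuEq β ξ e ηb z) :
    ∀ z ∈ U, ξ z ≠ 0 →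
      wirtb (fun w => e w • spinV (ξ w)) z =
        (wirtb e z + ηb z * e z) • spinV (ξ z) +
          ((2 * β * Complex.normSq (e z) * spinSq (ξ z) ^ 2 : ℝ) : ℂ) •
            toC3 (spinN (ξ z)) := by
  intro z hz hne
  have hzU : U ∈ nhds z := hU.mem_nhds hz
  have hξd : DifferentiableAt ℝ ξ z := (hξ.contDiffAt hzU).differentiableAt (by simp)
  have hed : DifferentiableAt ℝ e z := (he.contDiffAt hzU).differentiableAt (by simp)
  have h0 : DifferentiableAt ℝ (fun w => ξ w 0) z :=
    ((ContinuousLinearMap.proj 0 : (Fin 2 → ℂ) →L[ℝ] ℂ).differentiableAt).comp z hξd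
  have h1 : DifferentiableAt ℝ (fun w => ξ w 1) z :=
    ((ContinuousLinearMap.proj 1 : (Fin 2 → ℂ) →L[ℝ] ℂ).differentiableAt).comp z hξd
  have hEq := heq z hz
  rw [grossNeveuEq] at hEq
  have hw0 : wirtb (fun w => ξ w 0) z
      = (2:ℂ)⁻¹ * ηb z * ξ z 0 + (β:ℂ) * conj (e z) * ((spinSq (ξ z):ℝ):ℂ) * conj (ξ z 1) := by
    rw [wirtb_eval ξ z hξd 0, hEq]
    simp [sigma2, Matrix.mulVec, dotProduct, Fin.sum_univ_two]
    linear_combination (-(β:ℂ) * conj (e z) * ((spinSq (ξ z):ℝ):ℂ) * conj (ξ z 1)) * Complex.I_sq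
  have hw1 : wirtb (fun w => ξ w 1) z
      = (2:ℂ)⁻¹ * ηb z * ξ z 1 - (β:ℂ) * conj (e z) * ((spinSq (ξ z):ℝ):ℂ) * conj (ξ z 0) := by
    rw [wirtb_eval ξ z hξd 1, hEq]
    simp [sigma2, Matrix.mulVec, dotProduct, Fin.sum_univ_two]
    linear_combination ((β:ℂ) * conj (e z) * ((spinSq (ξ z):ℝ):ℂ) * conj (ξ z 0)) * Complex.I_sq
  have hspos : 0 < spinSq (ξ z) := by
    rcases (show ξ z 0 ≠ 0 ∨ ξ z 1 ≠ 0 by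
      by_contra h; push_neg at h
      exact hne (by funext i; fin_cases i <;> simp [h.1, h.2])) with h | h
    · exact add_pos_of_pos_of_nonneg (normSq_pos.2 h) (normSq_nonneg _)
    · exact add_pos_of_nonneg_of_pos (normSq_nonneg _) (normSq_pos.2 h)
  have hsne : ((spinSq (ξ z) : ℝ) : ℂ) ≠ 0 := by
    exact_mod_cast ne_of_gt hspos
  have hs : ((spinSq (ξ z) : ℝ) : ℂ) = ξ z 0 * conj (ξ z 0) + ξ z 1 * conj (ξ z 1) := by
    rw [spinSq]; push_cast [← Complex.mul_conj]; ring
  have hprod : ξ z 0 * conj (ξ z 0) + ξ z 1 * conj (ξ z 1) ≠ 0 := by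
    rw [← hs]; exact hsne
  have hfun : (fun w => e w • spinV (ξ w)) =
      fun w => ![e w * (ξ w 0 ^ 2 - ξ w 1 ^ 2),
                 e w * (Complex.I * (ξ w 0 ^ 2 + ξ w 1 ^ 2)),
                 e w * (-2 * ξ w 0 * ξ w 1)] := by
    funext w i
    fin_cases i <;> simp [spinV]
  rw [hfun]
  have h0sq : DifferentiableAt ℝ (fun w => ξ w 0 ^ 2) z := h0.pow 2
  have h1sq : DifferentiableAt ℝ (fun w => ξ w 1 ^ 2) z := h1.pow 2
  have hA : DifferentiableAt ℝ (fun w => ξ w 0 ^ 2 - ξ w 1 ^ 2) z := h0sq.sub h1sq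
  have hB : DifferentiableAt ℝ (fun w => Complex.I * (ξ w 0 ^ 2 + ξ w 1 ^ 2)) z :=
    (differentiableAt_const _).mul (h0sq.add h1sq)
  have hC : DifferentiableAt ℝ (fun w => -2 * ξ w 0 * ξ w 1) z :=
    (((differentiableAt_const (-2 : ℂ)).mul h0).mul h1)
  have hdiff : ∀ i, DifferentiableAt ℝ (fun w =>
      ![e w * (ξ w 0 ^ 2 - ξ w 1 ^ 2),
        e w * (Complex.I * (ξ w 0 ^ 2 + ξ w 1 ^ 2)),
        e w * (-2 * ξ w 0 * ξ w 1)] i) z := by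
    intro i
    fin_cases i
    · simpa using hed.fun_mul hA
    · simpa using hed.fun_mul hB
    · simpa using hed.fun_mul hC
  funext i
  rw [wirtb_pi _ z hdiff i]
  fin_cases i
  · show wirtb (fun w => e w * (ξ w 0 ^ 2 - ξ w 1 ^ 2)) z
      = (wirtb e z + ηb z * e z) * (spinV (ξ z) 0)
        + ((2 * β * Complex.normSq (e z) * spinSq (ξ z) ^ 2 : ℝ) : ℂ) * ((spinN (ξ z) 0 : ℝ) : ℂ)
    rw [wirtb_mul e _ z hed hA, wirtb_sub _ _ z h0sq h1sq,
        wirtb_sq _ z h0, wirtb_sq _ z h1, hw0, hw1]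
    simp only [spinV, spinN, spinSq, Matrix.cons_val_zero, Pi.smul_apply, smul_eq_mul]
    push_cast [← Complex.mul_conj]
    rw [re_cast_eq]
    simp only [map_mul, Complex.conj_conj]
    field_simp [hprod]
    ring
  · show wirtb (fun w => e w * (Complex.I * (ξ w 0 ^ 2 + ξ w 1 ^ 2))) z
      = (wirtb e z + ηb z * e z) * (spinV (ξ z) 1)
        + ((2 * β * Complex.normSq (e z) * spinSq (ξ z) ^ 2 : ℝ) : ℂ) * ((spinN (ξ z) 1 : ℝ) : ℂ)
    rw [wirtb_mul e _ z hed hB, wirtb_const_mul _ _ z (h0sq.fun_add h1sq),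
        wirtb_add' _ _ z h0sq h1sq, wirtb_sq _ z h0, wirtb_sq _ z h1, hw0, hw1]
    simp only [spinV, spinN, spinSq, Matrix.cons_val_one, Matrix.head_cons, Pi.smul_apply,
      smul_eq_mul]
    push_cast [← Complex.mul_conj]
    rw [im_cast_eq]
    simp only [map_mul, Complex.conj_conj]
    field_simp [hprod]
    ring
  · show wirtb (fun w => e w * (-2 * ξ w 0 * ξ w 1)) z
      = (wirtb e z + ηb z * e z) * (spinV (ξ z) 2)
        + ((2 * β * Complex.normSq (e z) * spinSq (ξ z) ^ 2 : ℝ) : ℂ) * ((spinN (ξ z) 2 : ℝ) : ℂ)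
    have hrw : (fun w => -2 * ξ w 0 * ξ w 1) = (fun w => (-2:ℂ) * (ξ w 0 * ξ w 1)) := by
      funext w; ring
    rw [wirtb_mul e _ z hed hC, hrw, wirtb_const_mul _ _ z (h0.fun_mul h1),
        wirtb_mul _ _ z h0 h1, hw0, hw1]
    simp only [spinV, spinN, spinSq, Matrix.cons_val_two, Matrix.tail_cons, Matrix.head_cons,
      Pi.smul_apply, smul_eq_mul]
    push_cast [← Complex.mul_conj]
    field_simp [hprod]
    ring
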